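/- Fix an integer d ≥ 1, p ∈ (0,1), τ > 0, a frequency vector α = (α_1,…,α_d) ∈ ℝ^d, and a bounded family (f̃_j)_{j∈ℤ^d} of complex numbers satisfying conj(f̃_j) = f̃_{−j} for all j; set f(x) = Σ_{j∈ℤ^d} f̃_j ψ_j(x) and ω_j = j_1 α_1 + … + j_d α_d. Then for every x ∈ ℝ^d and every t ∈ ℝ, the evolved observable under the torus rotation flow Φ^t(x) = x + tα satisfies f(Φ^t(x)) = (1/(2κ̃)) Σ_{(i,j)∈ℤ^d×ℤ^d} e^{i(ω_j − ω_i)t} ψ_i^*(x) ψ_j(x) (c_{i,j−i} + c_{j,i−j}) f̃_{j−i}, the double sum converging absolutely. -/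

import Mathlib

/-! The summand indexed by `(i, j)` factorises as `(e^{-τ|i|_p} + e^{-τ|j|_p}) · f̃_{j-i} ψ_{j-i}(Φ^t x)`:
the product `ψ_i^* ψ_j` is a multiple of `ψ_{j-i}`, which `c_{i,j-i}` and `c_{j,i-j}` turn into
`e^{-τ|i|_p}` and `e^{-τ|j|_p}`, and `ψ_k ∘ Φ^t = e^{i ω_k t} ψ_k`. Re-indexing by `k = j - i` splits
the double sum into two products `κ̃ · Σ_k f̃_k ψ_k(Φ^t x)`, all sums converging absolutely since
`e^{-τ|j|_p}` is summable over `ℤ^d`. -/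

noncomputable section

namespace QECD

/-- `|j|_p = |j_1|^p + … + |j_d|^p` for a multi-index `j ∈ ℤ^d`. -/
def normP (d : ℕ) (p : ℝ) (j : Fin d → ℤ) : ℝ := ∑ i, |((j i : ℝ))| ^ p

/-- `ψ_j(x) = e^{−τ|j|_p/2} e^{i j·x}` on the `d`-torus. -/
def psiD (d : ℕ) (p τ : ℝ) (j : Fin d → ℤ) (x : Fin d → ℝ) : ℂ :=
  (Real.exp (-(τ * normP d p j) / 2) : ℂ) *
    Complex.exp (Complex.I * ((∑ i, (j i : ℝ) * x i : ℝ) : ℂ))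

/-- Structure constants `c_{jl} = e^{−τ(|j|_p + |l|_p − |j+l|_p)/2}`. -/
def cstD (d : ℕ) (p τ : ℝ) (j l : Fin d → ℤ) : ℝ :=
  Real.exp (-(τ * (normP d p j + normP d p l - normP d p (j + l))) / 2)

/-- `κ̃ = Σ_{j∈ℤ^d} e^{−τ|j|_p}`. -/
def kapTilde (d : ℕ) (p τ : ℝ) : ℝ := ∑' j : Fin d → ℤ, Real.exp (-(τ * normP d p j))

/-- Koopman eigenfrequency `ω_j = j·α`. -/
def omega (d : ℕ) (α : Fin d → ℝ) (j : Fin d → ℤ) : ℝ := ∑ i, (j i : ℝ) * α i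

section Convolution

variable {G R : Type*} [AddGroup G] [NormedRing R] {f g : G → R}

theorem summable_norm_mul_sub_fst (hf : Summable (‖f ·‖)) (hg : Summable (‖g ·‖)) :
    Summable fun q : G × G => ‖f q.1 * g (q.2 - q.1)‖ :=
  ((Equiv.prodShear (.refl G) Equiv.subRight).summable_iff
    (f := fun q : G × G => ‖f q.1 * g q.2‖)).2 (hf.mul_norm hg)

theorem summable_norm_mul_sub_snd (hf : Summable (‖f ·‖)) (hg : Summable (‖g ·‖)) :
    Summable fun q : G × G => ‖f q.2 * g (q.2 - q.1)‖ :=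
  (((Equiv.prodComm G G).trans (Equiv.prodShear (.refl G) Equiv.subLeft)).summable_iff
    (f := fun q : G × G => ‖f q.1 * g q.2‖)).2 (hf.mul_norm hg)

variable [CompleteSpace R]

theorem tsum_mul_sub_fst (hf : Summable (‖f ·‖)) (hg : Summable (‖g ·‖)) :
    ∑' q : G × G, f q.1 * g (q.2 - q.1) = (∑' i, f i) * ∑' k, g k := by
  rw [tsum_mul_tsum_of_summable_norm hf hg]
  exact (Equiv.prodShear (.refl G) Equiv.subRight).tsum_eq (fun q : G × G => f q.1 * g q.2)

theorem tsum_mul_sub_snd (hf : Summable (‖f ·‖)) (hg : Summable (‖g ·‖)) :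
    ∑' q : G × G, f q.2 * g (q.2 - q.1) = (∑' i, f i) * ∑' k, g k := by
  rw [tsum_mul_tsum_of_summable_norm hf hg]
  exact ((Equiv.prodComm G G).trans (Equiv.prodShear (.refl G) Equiv.subLeft)).tsum_eq
    (fun q : G × G => f q.1 * g q.2)

end Convolution

theorem summable_fin_pi_prod {α : Type*} {f : α → ℝ} (hf0 : 0 ≤ f) (hf : Summable f) (d : ℕ) :
    Summable fun j : Fin d → α => ∏ i, f (j i) := by
  induction d with
  | zero => exact .of_finite
  | succ d ih =>
    have hprod : Summable fun q : α × (Fin d → α) => f q.1 * ∏ i : Fin d, f (q.2 i) :=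
      hf.mul_of_nonneg (g := fun j : Fin d → α => ∏ i, f (j i)) ih hf0 fun j =>
        Finset.prod_nonneg fun i _ => hf0 (j i)
    refine ((Fin.consEquiv fun _ => α).summable_iff).1 (hprod.congr fun q => ?_)
    simp only [Function.comp_apply, Fin.consEquiv, Equiv.coe_fn_mk, Fin.prod_univ_succ,
      Fin.cons_zero, Fin.cons_succ]

open Filter Asymptotics in
theorem summable_exp_neg_mul_rpow_natCast {c p : ℝ} (hc : 0 < c) (hp : 0 < p) :
    Summable fun n : ℕ => Real.exp (-(c * (n : ℝ) ^ p)) := by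
  have hlittle : (fun x : ℝ => Real.exp (-(c * x ^ p))) =o[atTop] fun x => x ^ (-2 : ℝ) := by
    refine ((isLittleO_exp_neg_mul_rpow_atTop hc (-2 / p)).comp_tendsto
      (tendsto_rpow_atTop hp)).congr' (.of_forall fun x => by simp [neg_mul]) ?_
    filter_upwards [eventually_gt_atTop 0] with x hx
    rw [Function.comp_apply, ← Real.rpow_mul hx.le, mul_div_cancel₀ _ hp.ne']
  exact summable_of_isBigO_nat (Real.summable_nat_rpow.mpr (by norm_num))
    (hlittle.isBigO.comp_tendsto tendsto_natCast_atTop_atTop)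

theorem summable_exp_neg_mul_rpow_abs_intCast {c p : ℝ} (hc : 0 < c) (hp : 0 < p) :
    Summable fun n : ℤ => Real.exp (-(c * |(n : ℝ)| ^ p)) := by
  apply Summable.of_nat_of_neg <;> simpa using summable_exp_neg_mul_rpow_natCast hc hp

theorem summable_exp_neg_mul_normP (d : ℕ) {c p : ℝ} (hc : 0 < c) (hp : 0 < p) :
    Summable fun j : Fin d → ℤ => Real.exp (-(c * normP d p j)) := by
  refine (summable_fin_pi_prod (fun _ => (Real.exp_pos _).le)
    (summable_exp_neg_mul_rpow_abs_intCast hc hp) d).congr fun j => ?_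
  rw [normP, Finset.mul_sum, ← Finset.sum_neg_distrib, Real.exp_sum]

section Multiindex

variable {d : ℕ} {p τ : ℝ}

theorem normP_neg (j : Fin d → ℤ) : normP d p (-j) = normP d p j := by
  simp [normP]

theorem normP_sub_comm (i j : Fin d → ℤ) : normP d p (i - j) = normP d p (j - i) := by
  rw [← neg_sub, normP_neg]

theorem omega_sub (α : Fin d → ℝ) (i j : Fin d → ℤ) :
    omega d α (j - i) = omega d α j - omega d α i := by
  simp only [omega, ← Finset.sum_sub_distrib, Pi.sub_apply, Int.cast_sub, sub_mul]

theorem norm_psiD (j : Fin d → ℤ) (x : Fin d → ℝ) :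
    ‖psiD d p τ j x‖ = Real.exp (-(τ * normP d p j) / 2) := by
  rw [psiD, norm_mul, mul_comm Complex.I, Complex.norm_exp_ofReal_mul_I, Complex.norm_real,
    Real.norm_of_nonneg (Real.exp_pos _).le, mul_one]

theorem psiD_translate (α : Fin d → ℝ) (k : Fin d → ℤ) (x : Fin d → ℝ) (t : ℝ) :
    psiD d p τ k (fun m => x m + t * α m)
      = Complex.exp (Complex.I * ((omega d α k * t : ℝ) : ℂ)) * psiD d p τ k x := by
  have hphase : ∑ m, (k m : ℝ) * (x m + t * α m) = omega d α k * t + ∑ m, (k m : ℝ) * x m := by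
    simp only [omega, Finset.sum_mul, ← Finset.sum_add_distrib]
    exact Finset.sum_congr rfl fun m _ => by ring
  rw [psiD, psiD, hphase, Complex.ofReal_add, mul_add, Complex.exp_add]
  ring

theorem conj_psiD_mul_psiD (i j : Fin d → ℤ) (x : Fin d → ℝ) :
    starRingEnd ℂ (psiD d p τ i x) * psiD d p τ j x
      = (Real.exp (-(τ * (normP d p i + normP d p j - normP d p (j - i))) / 2) : ℂ) *
        psiD d p τ (j - i) x := by
  have hphase : ∑ m, ((j - i) m : ℝ) * x m = ∑ m, (j m : ℝ) * x m - ∑ m, (i m : ℝ) * x m := by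
    simp only [← Finset.sum_sub_distrib, Pi.sub_apply, Int.cast_sub, sub_mul]
  have hamp : Real.exp (-(τ * normP d p i) / 2) * Real.exp (-(τ * normP d p j) / 2)
      = Real.exp (-(τ * (normP d p i + normP d p j - normP d p (j - i))) / 2) *
        Real.exp (-(τ * normP d p (j - i)) / 2) := by
    rw [← Real.exp_add, ← Real.exp_add]
    ring_nf
  have hexp : Complex.exp (Complex.I * ↑(∑ m, (j m : ℝ) * x m - ∑ m, (i m : ℝ) * x m))
      = Complex.exp (-Complex.I * ↑(∑ m, (i m : ℝ) * x m)) *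
        Complex.exp (Complex.I * ↑(∑ m, (j m : ℝ) * x m)) := by
    rw [← Complex.exp_add]
    push_cast
    ring_nf
  simp only [psiD, map_mul, Complex.conj_ofReal, ← Complex.exp_conj, Complex.conj_I, hphase, hexp]
  have hampC := congrArg Complex.ofReal hamp
  rw [Complex.ofReal_mul, Complex.ofReal_mul] at hampC
  linear_combination
    (Complex.exp (-Complex.I * ↑(∑ m, (i m : ℝ) * x m)) *
      Complex.exp (Complex.I * ↑(∑ m, (j m : ℝ) * x m))) * hampC

theorem exp_mul_cstD_sub_left (i j : Fin d → ℤ) :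
    Real.exp (-(τ * (normP d p i + normP d p j - normP d p (j - i))) / 2) * cstD d p τ i (j - i)
      = Real.exp (-(τ * normP d p i)) := by
  rw [cstD, add_sub_cancel, ← Real.exp_add]
  ring_nf

theorem exp_mul_cstD_sub_right (i j : Fin d → ℤ) :
    Real.exp (-(τ * (normP d p i + normP d p j - normP d p (j - i))) / 2) * cstD d p τ j (i - j)
      = Real.exp (-(τ * normP d p j)) := by
  rw [cstD, add_sub_cancel, normP_sub_comm, ← Real.exp_add]
  ring_nf

theorem koopman_summand_eq (α : Fin d → ℝ) (ft : (Fin d → ℤ) → ℂ) (x : Fin d → ℝ) (t : ℝ)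
    (i j : Fin d → ℤ) :
    Complex.exp (Complex.I * (((omega d α j - omega d α i) * t : ℝ) : ℂ)) *
        starRingEnd ℂ (psiD d p τ i x) * psiD d p τ j x *
        ((cstD d p τ i (j - i) + cstD d p τ j (i - j) : ℝ) : ℂ) * ft (j - i)
      = ((Real.exp (-(τ * normP d p i)) : ℂ) + Real.exp (-(τ * normP d p j))) *
        (ft (j - i) * psiD d p τ (j - i) (fun m => x m + t * α m)) := by
  have hleft := congrArg Complex.ofReal (exp_mul_cstD_sub_left (p := p) (τ := τ) i j)
  have hright := congrArg Complex.ofReal (exp_mul_cstD_sub_right (p := p) (τ := τ) i j)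
  rw [Complex.ofReal_mul] at hleft hright
  rw [psiD_translate, omega_sub, mul_assoc (Complex.exp _), conj_psiD_mul_psiD, Complex.ofReal_add]
  linear_combination
    (Complex.exp (Complex.I * (((omega d α j - omega d α i) * t : ℝ) : ℂ)) *
      psiD d p τ (j - i) x * ft (j - i)) * (hleft + hright)

theorem summable_norm_mul_psiD {ft : (Fin d → ℤ) → ℂ} {B : ℝ} (hB : ∀ j, ‖ft j‖ ≤ B)
    (hτ : 0 < τ) (hp : 0 < p) (x : Fin d → ℝ) :
    Summable fun k => ‖ft k * psiD d p τ k x‖ := by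
  refine .of_nonneg_of_le (fun _ => norm_nonneg _) (fun k => ?_)
    ((summable_exp_neg_mul_normP d (half_pos hτ) hp).mul_left B)
  rw [norm_mul, norm_psiD, neg_div, ← mul_div_right_comm, ← neg_div]
  exact mul_le_mul_of_nonneg_right (hB k) (Real.exp_pos _).le

theorem kapTilde_pos (hτ : 0 < τ) (hp : 0 < p) : 0 < kapTilde d p τ :=
  (summable_exp_neg_mul_normP d hτ hp).tsum_pos (fun _ => (Real.exp_pos _).le) 0 (Real.exp_pos _)

end Multiindex

theorem koopman_evolution_expectation_general (d : ℕ) (p τ : ℝ)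
    (hp : p ∈ Set.Ioo (0 : ℝ) 1) (hτ : 0 < τ) (α : Fin d → ℝ)
    (ft : (Fin d → ℤ) → ℂ) (B : ℝ) (hB : ∀ j, ‖ft j‖ ≤ B)
    (x : Fin d → ℝ) (t : ℝ) :
    Summable (fun ij : (Fin d → ℤ) × (Fin d → ℤ) =>
      ‖Complex.exp (Complex.I *
          (((omega d α ij.2 - omega d α ij.1) * t : ℝ) : ℂ)) *
        (starRingEnd ℂ) (psiD d p τ ij.1 x) * psiD d p τ ij.2 x *
        ((cstD d p τ ij.1 (ij.2 - ij.1) + cstD d p τ ij.2 (ij.1 - ij.2) : ℝ) : ℂ) *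
        ft (ij.2 - ij.1)‖) ∧
    (∑' j : Fin d → ℤ, ft j * psiD d p τ j (fun i => x i + t * α i))
      = (1 / (2 * (kapTilde d p τ : ℂ))) *
          ∑' ij : (Fin d → ℤ) × (Fin d → ℤ),
            Complex.exp (Complex.I * (((omega d α ij.2 - omega d α ij.1) * t : ℝ) : ℂ)) *
              (starRingEnd ℂ) (psiD d p τ ij.1 x) * psiD d p τ ij.2 x *
              ((cstD d p τ ij.1 (ij.2 - ij.1) + cstD d p τ ij.2 (ij.1 - ij.2) : ℝ) : ℂ) *
              ft (ij.2 - ij.1) := by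
  simp_rw [koopman_summand_eq, add_mul]
  set E : (Fin d → ℤ) → ℂ := fun i => (Real.exp (-(τ * normP d p i)) : ℂ)
  set g : (Fin d → ℤ) → ℂ := fun k => ft k * psiD d p τ k (fun m => x m + t * α m)
  have hE : Summable (‖E ·‖) := (summable_exp_neg_mul_normP d hτ hp.1).congr fun i => by
    rw [Complex.norm_real, Real.norm_of_nonneg (Real.exp_pos _).le]
  have hg : Summable (‖g ·‖) := summable_norm_mul_psiD hB hτ hp.1 _
  have h1 := summable_norm_mul_sub_fst hE hg
  have h2 := summable_norm_mul_sub_snd hE hg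
  have hκ : (kapTilde d p τ : ℂ) = ∑' i, E i := by rw [kapTilde, Complex.ofReal_tsum]
  refine ⟨.of_nonneg_of_le (fun _ => norm_nonneg _) (fun _ => norm_add_le _ _) (h1.add h2), ?_⟩
  rw [h1.of_norm.tsum_add h2.of_norm, tsum_mul_sub_fst hE hg, tsum_mul_sub_snd hE hg, ← hκ]
  field_simp [Complex.ofReal_ne_zero.2 (kapTilde_pos hτ hp.1).ne']
  ring

/-- For bounded coefficients `(f̃_j)` with `conj f̃_j = f̃_{−j}`, and
`f = Σ_j f̃_j ψ_j`, the evolved observable under the rotation flow `Φ^t(x) = x + tα` satisfies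
`f(Φ^t(x)) = (1/(2κ̃)) Σ_{(i,j)} e^{i(ω_j−ω_i)t} ψ_i^*(x) ψ_j(x)(c_{i,j−i}+c_{j,i−j}) f̃_{j−i}`,
the double sum converging absolutely. -/
theorem koopman_evolution_expectation (d : ℕ) (hd : 1 ≤ d) (p τ : ℝ)
    (hp : p ∈ Set.Ioo (0 : ℝ) 1) (hτ : 0 < τ) (α : Fin d → ℝ)
    (ft : (Fin d → ℤ) → ℂ) (B : ℝ) (hB : ∀ j, ‖ft j‖ ≤ B)
    (hconj : ∀ j, (starRingEnd ℂ) (ft j) = ft (-j)) (x : Fin d → ℝ) (t : ℝ) :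
    Summable (fun ij : (Fin d → ℤ) × (Fin d → ℤ) =>
      ‖Complex.exp (Complex.I *
          (((omega d α ij.2 - omega d α ij.1) * t : ℝ) : ℂ)) *
        (starRingEnd ℂ) (psiD d p τ ij.1 x) * psiD d p τ ij.2 x *
        ((cstD d p τ ij.1 (ij.2 - ij.1) + cstD d p τ ij.2 (ij.1 - ij.2) : ℝ) : ℂ) *
        ft (ij.2 - ij.1)‖) ∧
    (∑' j : Fin d → ℤ, ft j * psiD d p τ j (fun i => x i + t * α i))
      = (1 / (2 * (kapTilde d p τ : ℂ))) *
          ∑' ij : (Fin d → ℤ) × (Fin d → ℤ),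
            Complex.exp (Complex.I * (((omega d α ij.2 - omega d α ij.1) * t : ℝ) : ℂ)) *
              (starRingEnd ℂ) (psiD d p τ ij.1 x) * psiD d p τ ij.2 x *
              ((cstD d p τ ij.1 (ij.2 - ij.1) + cstD d p τ ij.2 (ij.1 - ij.2) : ℝ) : ℂ) *
              ft (ij.2 - ij.1) :=
  koopman_evolution_expectation_general d p τ hp hτ α ft B hB x t

end QECD
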